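/- Let X be a non-deterministic infinite exchangeable sequence of {0,1}-valued random variables. For every n ≥ 2, the set Ξ_n(X) of completely degenerate symmetric kernels of order n is the 1-dimensional vector space spanned by the symmetric kernel φ_n^(0) : {0,1}^n → ℝ defined by φ_n^(0)(0^(k)) = (−1)^k · P_n(0^(0)) / P_n(0^(k)) for k = 0,…,n, where φ_n^(0)(0^(k)) denotes the common value of φ_n^(0) on all vectors of {0,1}^n containing exactly k zeros. -/

import Mathlib

open MeasureTheory

namespace HoeffdingUrn

variable {Ω : Type} [MeasurableSpace Ω]

/-- `X` is an exchangeable sequence under `μ`: each `X i` is measurable and, for every `n`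
and every permutation `π` of `{0,…,n-1}`, the law of `(X_{π 0},…,X_{π (n-1)})` coincides with
the law of `(X_0,…,X_{n-1})`. -/
def Exchangeable {D : Type} [MeasurableSpace D] (X : ℕ → Ω → D) (μ : Measure Ω) : Prop :=
  (∀ i, Measurable (X i)) ∧
  ∀ (n : ℕ) (π : Equiv.Perm (Fin n)),
    Measure.map (fun ω (i : Fin n) => X ((π i : Fin n) : ℕ) ω) μ =
      Measure.map (fun ω (i : Fin n) => X (i : ℕ) ω) μ

/-- probability that the first `n` variables equal the vector `x`. -/
noncomputable def cylProb {D : Type} (X : ℕ → Ω → D) (μ : Measure Ω) {n : ℕ}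
    (x : Fin n → D) : ℝ :=
  (μ {ω | ∀ i : Fin n, X (i : ℕ) ω = x i}).toReal

/-- `X` is non-deterministic: every finite configuration has positive probability. -/
def NonDeterministic {D : Type} (X : ℕ → Ω → D) (μ : Measure Ω) : Prop :=
  ∀ n : ℕ, 1 ≤ n → ∀ x : Fin n → D, 0 < cylProb X μ x

/-- the canonical vector of `{0,1}ⁿ` (with `false` = 0) containing exactly `j` zeros. -/
def zeroVec (n j : ℕ) : Fin n → Bool := fun i => decide (j ≤ (i : ℕ))

/-- number of zeros (`false` entries) in a Boolean vector. -/
def zeroCountVec {n : ℕ} (x : Fin n → Bool) : ℕ :=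
  (Finset.univ.filter fun i => x i = false).card

/-- `P_n(0^{(j)})`: the common probability of any configuration of `(X_1,…,X_n)` with
exactly `j` zeros. -/
noncomputable def Pz (X : ℕ → Ω → Bool) (μ : Measure Ω) (n j : ℕ) : ℝ :=
  cylProb X μ (zeroVec n j)

/-- number of zeros among the first `n` variables. -/
def zeroCount (X : ℕ → Ω → Bool) (n : ℕ) (ω : Ω) : ℕ :=
  zeroCountVec (fun i : Fin n => X (i : ℕ) ω)

/-- `P^n_{n+v}(0^{(b)} ∣ 0^{(a)})`: conditional probability that `(X_1,…,X_{n+v})`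
contains exactly `b` zeros given that `(X_1,…,X_n)` contains exactly `a` zeros. -/
noncomputable def condP (X : ℕ → Ω → Bool) (μ : Measure Ω) (n v b a : ℕ) : ℝ :=
  (μ {ω | zeroCount X (n + v) ω = b ∧ zeroCount X n ω = a}).toReal /
    (μ {ω | zeroCount X n ω = a}).toReal

/-- a symmetric function of `k` variables. -/
def SymmFun {D : Type} {k : ℕ} (φ : (Fin k → D) → ℝ) : Prop :=
  ∀ (π : Equiv.Perm (Fin k)) (x : Fin k → D), φ (x ∘ π) = φ x

open Classical in
/-- the symmetric `U`-statistic with kernel `φ` of order `k`, based on `(X_1,…,X_n)`: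
`F = ∑_{1 ≤ j₁ < … < j_k ≤ n} φ(X_{j₁},…,X_{j_k})`. -/
noncomputable def Ustat {D : Type} (X : ℕ → Ω → D) (n : ℕ) {k : ℕ}
    (φ : (Fin k → D) → ℝ) : Ω → ℝ :=
  fun ω => ∑ j : Fin k → Fin n, if StrictMono j then φ (fun i => X ((j i : Fin n) : ℕ) ω) else 0

/-- complete degeneracy of the kernel `φ` of order `k`:
`E[φ(X_1,…,X_k) ∣ X_2,…,X_k] = 0` a.s. -/
def Degenerate {D : Type} [MeasurableSpace D] (X : ℕ → Ω → D) (μ : Measure Ω) {k : ℕ}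
    (φ : (Fin k → D) → ℝ) : Prop :=
  μ[(fun ω => φ (fun i => X (i : ℕ) ω)) |
      MeasurableSpace.comap (fun ω (i : Fin (k - 1)) => X ((i : ℕ) + 1) ω) inferInstance]
    =ᵐ[μ] 0

/-- `X` is Hoeffding decomposable: for every `n ≥ 2` and `1 ≤ k ≤ n`, a symmetric
`U`-statistic of order `k` based on `(X_1,…,X_n)` is orthogonal to `SU_{k-1}(X_{[n]})`
(equivalently, lies in `SH_k(X_{[n]})`) if and only if its kernel is completely degenerate. -/
def HoeffdingDecomposable {D : Type} [MeasurableSpace D] (X : ℕ → Ω → D) (μ : Measure Ω) :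
    Prop :=
  ∀ n : ℕ, 2 ≤ n → ∀ k : ℕ, 1 ≤ k → k ≤ n → ∀ φ : (Fin k → D) → ℝ, SymmFun φ →
    ((∀ ψ : (Fin (k - 1) → D) → ℝ, SymmFun ψ →
        ∫ ω, Ustat X n φ ω * Ustat X n ψ ω ∂μ = 0) ↔ Degenerate X μ φ)

/-- the symmetric Hoeffding spaces `SH_k(X_{[n]})`, `n ≥ 2`, `1 ≤ k ≤ n`, are all
non-trivial: each contains a `U`-statistic which is not a.s. zero. -/
def SHNontrivial {D : Type} (X : ℕ → Ω → D) (μ : Measure Ω) : Prop :=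
  ∀ n : ℕ, 2 ≤ n → ∀ k : ℕ, 1 ≤ k → k ≤ n →
    ∃ φ : (Fin k → D) → ℝ, SymmFun φ ∧
      (∀ ψ : (Fin (k - 1) → D) → ℝ, SymmFun ψ →
        ∫ ω, Ustat X n φ ω * Ustat X n ψ ω ∂μ = 0) ∧
      ∫ ω, (Ustat X n φ ω) ^ 2 ∂μ ≠ 0

/-- canonical symmetrization of a function of `m` variables. -/
noncomputable def symmetrize {D : Type} {m : ℕ} (f : (Fin m → D) → ℝ) : (Fin m → D) → ℝ :=
  fun x => (∑ π : Equiv.Perm (Fin m), f (x ∘ π)) / (Nat.factorial m : ℝ)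

/-- the vector `(y_1,…,y_u,x_1,…,x_{n-u})` of length `n` (for `1 ≤ u ≤ n`). -/
noncomputable def headTail {D : Type} [Nonempty D] (u n : ℕ) (y : Fin u → D)
    (x : Fin (n - 1) → D) : Fin n → D :=
  fun i =>
    if h : (i : ℕ) < u then y ⟨i, h⟩
    else if h2 : (i : ℕ) - u < n - 1 then x ⟨(i : ℕ) - u, h2⟩
    else Classical.arbitrary D

/-- `[T]^{(n-u)}_{n,n-1}`: the (version of the) conditional expectation
`E[T(X_1,…,X_n) ∣ X_{u+1},…,X_{u+n-1}]`, viewed as a function on `D^{n-1}`. -/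
noncomputable def condProj {D : Type} [Fintype D] [Nonempty D] (X : ℕ → Ω → D)
    (μ : Measure Ω) (n u : ℕ) (T : (Fin n → D) → ℝ) : (Fin (n - 1) → D) → ℝ :=
  fun x =>
    (∑ y : Fin u → D, T (headTail u n y x) * cylProb X μ (Fin.append y x)) / cylProb X μ x

/-- `X` is weakly independent: for every `n ≥ 2`, every symmetric `T : D^n → ℝ` with
`[T]^{(n-1)}_{n,n-1}(X_2,…,X_n) = 0` a.s. satisfies, for every `u = 2,…,n`,
`tilde-[T]^{(n-u)}_{n,n-1}(X_{u+1},…,X_{u+n-1}) = 0` a.s. -/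
def WeaklyIndependent {D : Type} [Fintype D] [Nonempty D] (X : ℕ → Ω → D)
    (μ : Measure Ω) : Prop :=
  ∀ n : ℕ, 2 ≤ n → ∀ T : (Fin n → D) → ℝ, SymmFun T →
    (∀ᵐ ω ∂μ, condProj X μ n 1 T (fun i : Fin (n - 1) => X ((i : ℕ) + 1) ω) = 0) →
    ∀ u : ℕ, 2 ≤ u → u ≤ n →
      ∀ᵐ ω ∂μ, symmetrize (condProj X μ n u T) (fun i : Fin (n - 1) => X (u + (i : ℕ)) ω) = 0

/-- `γ` is the de Finetti measure of the `{0,1}`-valued exchangeable sequence `X`. -/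
def IsDeFinettiMeasure (X : ℕ → Ω → Bool) (μ : Measure Ω) (γ : Measure ℝ) : Prop :=
  IsProbabilityMeasure γ ∧ γ (Set.Icc (0 : ℝ) 1)ᶜ = 0 ∧
  ∀ (n : ℕ) (x : Fin n → Bool),
    cylProb X μ x =
      ∫ θ, θ ^ (Finset.univ.filter fun i => x i = true).card *
        (1 - θ) ^ (Finset.univ.filter fun i => x i = false).card ∂γ

/-- the `n`-th moment of a measure on `[0,1] ⊆ ℝ`. -/
noncomputable def momentOf (γ : Measure ℝ) (n : ℕ) : ℝ := ∫ θ, θ ^ n ∂γ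

/-- the Beta(a,b) distribution on `[0,1]`, with density `θ^{a-1}(1-θ)^{b-1}/B(a,b)`. -/
noncomputable def betaMeasure (a b : ℝ) : Measure ℝ :=
  (volume.restrict (Set.Ioo (0 : ℝ) 1)).withDensity fun θ =>
    ENNReal.ofReal (θ ^ (a - 1) * (1 - θ) ^ (b - 1) /
      ∫ t in Set.Ioo (0 : ℝ) 1, t ^ (a - 1) * (1 - t) ^ (b - 1))

/-- the canonical completely degenerate kernel `φ_n^{(0)}` of order `n`:
`φ_n^{(0)}(0^{(k)}) = (-1)^k P_n(0^{(0)}) / P_n(0^{(k)})`. -/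
noncomputable def phi0 (X : ℕ → Ω → Bool) (μ : Measure Ω) (n : ℕ) :
    (Fin n → Bool) → ℝ :=
  fun x => (-1 : ℝ) ^ zeroCountVec x * (Pz X μ n 0 / Pz X μ n (zeroCountVec x))

/-- `f` is separately symmetric in its first `v` and last `m - v` variables. -/
def SepSymm {m : ℕ} (v : ℕ) (f : (Fin m → Bool) → ℝ) : Prop :=
  ∀ π : Equiv.Perm (Fin m), (∀ i : Fin m, (i : ℕ) < v ↔ ((π i : Fin m) : ℕ) < v) →
    ∀ x : Fin m → Bool, f (x ∘ π) = f x

/-- the canonical vector of `{0,1}^m` whose first `v` coordinates contain exactly `k`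
zeros and whose last `m - v` coordinates contain exactly `l` zeros. -/
def blockVec (m v k l : ℕ) : Fin m → Bool :=
  fun i => if (i : ℕ) < v then decide (k ≤ (i : ℕ)) else decide (l ≤ (i : ℕ) - v)

/-- `X` is an urn process in the sense of Hill, Lane and Sudderth: there are a measurable
`f : [0,1] → [0,1]` and positive integers `r`, `b` with
`P(X_{n+1} = 1 ∣ X_1,…,X_n) = f((r + X_1 + … + X_n)/(r + b + n))` a.s. for every `n ≥ 1`. -/
def IsUrnProcess (X : ℕ → Ω → Bool) (μ : Measure Ω) : Prop :=
  ∃ (f : ℝ → ℝ) (r b : ℕ), Measurable f ∧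
    Set.MapsTo f (Set.Icc (0 : ℝ) 1) (Set.Icc (0 : ℝ) 1) ∧ 0 < r ∧ 0 < b ∧
    ∀ n : ℕ, 1 ≤ n →
      (μ[(fun ω => if X n ω = true then (1 : ℝ) else 0) |
          MeasurableSpace.comap (fun ω (i : Fin n) => X (i : ℕ) ω) inferInstance]
        =ᵐ[μ] fun ω =>
          f (((r : ℝ) + ∑ i : Fin n, (if X (i : ℕ) ω = true then (1 : ℝ) else 0)) /
            ((r : ℝ) + (b : ℝ) + (n : ℝ))))

/-! Conditioning on `X_2,…,X_n` partitions `Ω` into the cells `{(X_2,…,X_n) = y}`, so a kernel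
`ψ` is degenerate iff `∑_b ψ(b,y) P(b,y) = 0` for every `y`. When `ψ` is symmetric and `X`
exchangeable, both `ψ` and `P` depend only on the number of zeros, and this becomes the two-term
recurrence `ψ(0^(k+1)) P_n(0^(k+1)) = -ψ(0^(k)) P_n(0^(k))` for `k < n`. As every `P_n(0^(k))` is
positive, its solutions are exactly the multiples of `φ_n^(0)`. -/

theorem exists_perm_comp_eq_of_card_fiber_eq {α β : Type*} [Fintype α] [DecidableEq β]
    {f g : α → β} (h : ∀ b, Fintype.card {a // f a = b} = Fintype.card {a // g a = b}) :
    ∃ σ : Equiv.Perm α, f ∘ σ = g :=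
  ⟨Equiv.ofFiberEquiv fun b => Fintype.equivOfCardEq (h b).symm,
    funext (Equiv.ofFiberEquiv_map _)⟩

theorem zeroCountVec_eq_card {n : ℕ} (x : Fin n → Bool) :
    zeroCountVec x = Fintype.card {i // x i = false} := by
  rw [zeroCountVec, Fintype.card_subtype]

theorem zeroCountVec_le {n : ℕ} (x : Fin n → Bool) : zeroCountVec x ≤ n :=
  (Finset.card_filter_le _ _).trans_eq (Finset.card_fin n)

theorem zeroCountVec_comp_perm {n : ℕ} (x : Fin n → Bool) (σ : Equiv.Perm (Fin n)) :
    zeroCountVec (x ∘ σ) = zeroCountVec x := by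
  simp only [zeroCountVec_eq_card]
  exact Fintype.card_congr (σ.subtypeEquiv fun _ => Iff.rfl)

theorem zeroCountVec_zeroVec {n j : ℕ} (h : j ≤ n) : zeroCountVec (zeroVec n j) = j := by
  simpa [zeroCountVec, zeroVec, Fin.card_filter_val_lt] using h

theorem zeroCountVec_cons {m : ℕ} (b : Bool) (y : Fin m → Bool) :
    zeroCountVec (Fin.cons b y : Fin (m + 1) → Bool) =
      zeroCountVec y + if b then 0 else 1 := by
  simp only [zeroCountVec, Finset.card_filter, Fin.sum_univ_succ, Fin.cons_zero, Fin.cons_succ]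
  cases b <;> simp [add_comm]

theorem exists_perm_comp_eq_of_zeroCountVec_eq {n : ℕ} {x y : Fin n → Bool}
    (h : zeroCountVec x = zeroCountVec y) : ∃ σ : Equiv.Perm (Fin n), x ∘ σ = y := by
  refine exists_perm_comp_eq_of_card_fiber_eq fun b => ?_
  have hfalse : Fintype.card {i // x i = false} = Fintype.card {i // y i = false} := by
    rwa [← zeroCountVec_eq_card, ← zeroCountVec_eq_card]
  cases b
  · exact hfalse
  · simp only [← Bool.not_eq_false]
    rw [Fintype.card_subtype_compl, Fintype.card_subtype_compl, hfalse]

theorem SymmFun.apply_eq_of_zeroCountVec_eq {n : ℕ} {ψ : (Fin n → Bool) → ℝ}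
    (hψ : SymmFun ψ) {x y : Fin n → Bool} (h : zeroCountVec x = zeroCountVec y) : ψ x = ψ y := by
  obtain ⟨σ, rfl⟩ := exists_perm_comp_eq_of_zeroCountVec_eq h
  exact (hψ σ x).symm

theorem SymmFun.apply_eq_zeroVec {n : ℕ} {ψ : (Fin n → Bool) → ℝ} (hψ : SymmFun ψ)
    (x : Fin n → Bool) : ψ x = ψ (zeroVec n (zeroCountVec x)) :=
  hψ.apply_eq_of_zeroCountVec_eq (zeroCountVec_zeroVec (zeroCountVec_le x)).symm

theorem symmFun_phi0 (X : ℕ → Ω → Bool) (μ : Measure Ω) (n : ℕ) : SymmFun (phi0 X μ n) := by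
  intro σ x
  simp only [phi0, zeroCountVec_comp_perm]

theorem Exchangeable.symmFun_cylProb {D : Type} [MeasurableSpace D]
    [MeasurableSingletonClass D] {X : ℕ → Ω → D} {μ : Measure Ω} (hX : Exchangeable X μ) (n : ℕ) :
    SymmFun (cylProb X μ (n := n)) := by
  intro σ x
  have hmeas : ∀ f : Fin n → ℕ, Measurable fun ω i => X (f i) ω :=
    fun f => measurable_pi_lambda _ fun i => hX.1 _
  have hlaw := congrArg (· {x}) (hX.2 n σ.symm)
  rw [Measure.map_apply (hmeas _) (measurableSet_singleton x),
    Measure.map_apply (hmeas _) (measurableSet_singleton x)] at hlaw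
  simp only [cylProb]
  convert congrArg ENNReal.toReal hlaw using 3 <;> ext ω
  · simp only [Set.mem_ofPred_eq, Set.mem_preimage, Set.mem_singleton_iff, funext_iff,
      Function.comp_apply]
    exact ⟨fun h i => by simpa using h (σ.symm i), fun h i => by simpa using h (σ i)⟩
  · simp [funext_iff]

theorem Exchangeable.cylProb_eq_Pz {X : ℕ → Ω → Bool} {μ : Measure Ω} (hX : Exchangeable X μ)
    {n : ℕ} (x : Fin n → Bool) : cylProb X μ x = Pz X μ n (zeroCountVec x) :=
  (hX.symmFun_cylProb n).apply_eq_zeroVec x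

theorem condExp_comap_ae_eq_zero_iff {E : Type*} [Fintype E] [MeasurableSpace E]
    [MeasurableSingletonClass E] {μ : Measure Ω} [IsFiniteMeasure μ] {Y : Ω → E}
    (hY : Measurable Y) {f : Ω → ℝ} (hf : Integrable f μ) :
    μ[f | MeasurableSpace.comap Y inferInstance] =ᵐ[μ] 0 ↔
      ∀ e, ∫ ω in Y ⁻¹' {e}, f ω ∂μ = 0 := by
  have hm : MeasurableSpace.comap Y inferInstance ≤ ‹MeasurableSpace Ω› := hY.comap_le
  constructor
  · intro h e
    rw [← setIntegral_condExp hm hf ⟨{e}, measurableSet_singleton e, rfl⟩,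
      integral_congr_ae (ae_restrict_of_ae h)]
    simp
  · intro h
    refine (ae_eq_condExp_of_forall_setIntegral_eq hm hf
      (fun _ _ _ => integrableOn_zero) (fun s hs _ => ?_) aestronglyMeasurable_const).symm
    obtain ⟨A, -, rfl⟩ := hs
    classical
    have hA : Y ⁻¹' A = ⋃ e ∈ Finset.univ.filter (· ∈ A), Y ⁻¹' {e} := by
      ext ω
      simp
    rw [hA, integral_biUnion_finset _ (fun e _ => hY (measurableSet_singleton e))
      (fun a _ b _ hab => (Set.disjoint_singleton.mpr hab).preimage Y)
      (fun e _ => hf.integrableOn), Finset.sum_eq_zero fun e _ => h e]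
    simp

theorem degenerate_iff_sum_cylProb_cons {D : Type} [Fintype D] [MeasurableSpace D]
    [MeasurableSingletonClass D] {X : ℕ → Ω → D} (hX : ∀ i, Measurable (X i)) {μ : Measure Ω}
    [IsFiniteMeasure μ] {m : ℕ} (ψ : (Fin (m + 1) → D) → ℝ) :
    Degenerate X μ ψ ↔ ∀ y : Fin m → D,
      ∑ d, ψ (Fin.cons d y) * cylProb X μ (Fin.cons d y : Fin (m + 1) → D) = 0 := by
  set Z : Ω → Fin (m + 1) → D := fun ω i => X i ω
  have hZ : Measurable Z := measurable_pi_lambda _ fun i => hX _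
  have hψZ : Integrable (fun ω => ψ (Z ω)) μ := Integrable.of_finite.comp_measurable hZ
  have hfiber : ∀ v, ∫ ω in Z ⁻¹' {v}, ψ (Z ω) ∂μ = ψ v * cylProb X μ v := by
    intro v
    rw [setIntegral_congr_fun (hZ (measurableSet_singleton v))
        fun ω (hω : Z ω = v) => by rw [hω],
      setIntegral_const, smul_eq_mul, mul_comm, cylProb, measureReal_def]
    congr 3
    ext ω
    simp [Z, funext_iff]
  refine (condExp_comap_ae_eq_zero_iff (measurable_pi_lambda _ fun i => hX _) hψZ).trans
    (forall_congr' fun (y : Fin m → D) => ?_)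
  -- `Degenerate` conditions on `Fin (m + 1 - 1)`-tuples
  change ∫ ω in (fun ω (i : Fin m) => X (i + 1) ω) ⁻¹' {y}, ψ (Z ω) ∂μ = 0 ↔ _
  have hY : (fun ω (i : Fin m) => X (i + 1) ω) ⁻¹' {y} =
      ⋃ d ∈ Finset.univ, Z ⁻¹' {Fin.cons d y} := by
    ext ω
    simp [Z, funext_iff, Fin.forall_fin_succ]
  have hcons : Function.Injective fun d : D => (Fin.cons d y : Fin (m + 1) → D) :=
    Fin.cons_left_injective (α := fun _ => D) y
  rw [hY, integral_biUnion_finset (s := fun d => Z ⁻¹' {Fin.cons d y}) _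
    (fun d _ => hZ (measurableSet_singleton _))
    (fun a _ b _ hab => (Set.disjoint_singleton.mpr (hcons.ne hab)).preimage Z)
    (fun d _ => hψZ.integrableOn)]
  simp only [hfiber]

theorem Exchangeable.degenerate_iff_forall_zeroCountVec {X : ℕ → Ω → Bool} {μ : Measure Ω}
    [IsFiniteMeasure μ] (hX : Exchangeable X μ) {m : ℕ} {ψ : (Fin (m + 1) → Bool) → ℝ}
    (hψ : SymmFun ψ) :
    Degenerate X μ ψ ↔ ∀ y : Fin m → Bool,
      ψ (zeroVec (m + 1) (zeroCountVec y)) * Pz X μ (m + 1) (zeroCountVec y) +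
        ψ (zeroVec (m + 1) (zeroCountVec y + 1)) * Pz X μ (m + 1) (zeroCountVec y + 1) = 0 := by
  simp only [degenerate_iff_sum_cylProb_cons hX.1, Fintype.sum_bool, hX.cylProb_eq_Pz,
    hψ.apply_eq_zeroVec (Fin.cons _ _), zeroCountVec_cons]
  rfl

theorem forall_zeroCountVec_iff {m : ℕ} {p : ℕ → Prop} :
    (∀ y : Fin m → Bool, p (zeroCountVec y)) ↔ ∀ k < m + 1, p k :=
  ⟨fun h k hk => zeroCountVec_zeroVec (Nat.le_of_lt_succ hk) ▸ h (zeroVec m k),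
    fun h y => h _ (Nat.lt_succ_of_le (zeroCountVec_le y))⟩

theorem forall_add_succ_eq_zero_iff {R : Type*} [Ring R] (b : ℕ → R) (n : ℕ) :
    (∀ k < n, b k + b (k + 1) = 0) ↔ ∀ k ≤ n, b k = (-1) ^ k * b 0 := by
  constructor
  · intro h k hk
    induction k with
    | zero => simp
    | succ k ih =>
      rw [eq_neg_of_add_eq_zero_right (h k hk), ih (by omega), pow_succ]
      noncomm_ring
  · intro h k hk
    rw [h k hk.le, h (k + 1) hk, pow_succ]
    noncomm_ring

theorem Exchangeable.degenerate_iff_of_symmFun {X : ℕ → Ω → Bool} {μ : Measure Ω}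
    [IsFiniteMeasure μ] (hX : Exchangeable X μ) {m : ℕ} {ψ : (Fin (m + 1) → Bool) → ℝ}
    (hψ : SymmFun ψ) :
    Degenerate X μ ψ ↔ ∀ k ≤ m + 1,
      ψ (zeroVec (m + 1) k) * Pz X μ (m + 1) k =
        (-1) ^ k * (ψ (zeroVec (m + 1) 0) * Pz X μ (m + 1) 0) := by
  set b : ℕ → ℝ := fun k => ψ (zeroVec (m + 1) k) * Pz X μ (m + 1) k
  rw [hX.degenerate_iff_forall_zeroCountVec hψ]
  exact (forall_zeroCountVec_iff (p := fun k => b k + b (k + 1) = 0)).trans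
    (forall_add_succ_eq_zero_iff b (m + 1))

/-- Lemma 1. For a non-deterministic infinite exchangeable sequence of
`{0,1}`-valued random variables and `n ≥ 2`, the set `Ξ_n(X)` of completely degenerate
symmetric kernels of order `n` is the one-dimensional vector space spanned by the kernel
`φ_n^{(0)}` with `φ_n^{(0)}(0^{(k)}) = (-1)^k P_n(0^{(0)})/P_n(0^{(k)})`. -/
theorem xi_n_eq_span_phi0
    {Ω : Type} [MeasurableSpace Ω] (μ : Measure Ω) [IsProbabilityMeasure μ]
    (X : ℕ → Ω → Bool) (hexch : Exchangeable X μ) (hnd : NonDeterministic X μ)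
    (n : ℕ) (hn : 2 ≤ n) (φ : (Fin n → Bool) → ℝ) :
    (SymmFun φ ∧ Degenerate X μ φ) ↔ ∃ c : ℝ, φ = fun x => c * phi0 X μ n x := by
  obtain ⟨m, rfl⟩ : ∃ m, n = m + 1 := ⟨n - 1, by omega⟩
  have hP : ∀ k, Pz X μ (m + 1) k ≠ 0 := fun k => (hnd _ (by omega) _).ne'
  constructor
  · rintro ⟨hφ, hdeg⟩
    refine ⟨φ (zeroVec (m + 1) 0), funext fun x => ?_⟩
    have hx := (hexch.degenerate_iff_of_symmFun hφ).1 hdeg _ (zeroCountVec_le x)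
    rw [hφ.apply_eq_zeroVec x, phi0, mul_div_assoc', mul_div_assoc', eq_div_iff (hP _), hx]
    ring
  · rintro ⟨c, rfl⟩
    have hφ : SymmFun fun x => c * phi0 X μ (m + 1) x := fun σ x =>
      congrArg (c * ·) (symmFun_phi0 X μ (m + 1) σ x)
    refine ⟨hφ, (hexch.degenerate_iff_of_symmFun hφ).2 fun k hk => ?_⟩
    simp only [phi0, zeroCountVec_zeroVec hk, zeroCountVec_zeroVec (Nat.zero_le _)]
    field_simp [hP]

end HoeffdingUrn
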